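/- arXiv:1603.00416 — 3 statements merged into one kernel-verified Lean document; each statement's English description precedes it below -/
import Mathlib

section
/- Let G be a unipotent algebraic group with nilpotent Lie algebra g = ⊕_{n∈N^+} g_n graded by N^+, and θ ∈ Hom(N,R). With G_⋆(θ) = exp(g_⋆(θ)) for ⋆ ∈ {+,0,-}, every element g ∈ G has a unique decomposition g = g_+ · g_0 · g_- with g_± ∈ G_±(θ) and g_0 ∈ G_0(θ). -/
/- Following §5.7 of the paper, the group G = exp(g) is realised inside a graded associative
algebra A (with pieces A_n vanishing for total degree δ(n) > k, so the positive part is nilpotent)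
as the set 1 + A₊ of elements whose "positive part" lies in the span of the graded pieces of
nonzero degree; likewise exp(g_⋆(θ)) = 1 + A_⋆(θ) for ⋆ ∈ {+,0,-}, where A_⋆(θ) is the span of
the pieces A_n (n ≠ 0) with θ(n) > 0, = 0, < 0.  -/

/-- The pairing of a real functional θ ∈ Hom(N, ℝ) with a degree n ∈ ℕ^r ⊂ N. -/
def thetaPair' {r : ℕ} (θ : Fin r → ℝ) (n : Fin r → ℕ) : ℝ := ∑ i, θ i * (n i : ℝ)

/-! Let `A_P` be the span of the graded pieces with degree in `P`. For an additively closed set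
`P` of nonzero degrees, the elements of `A_P` are nilpotent, so `1 + A_P` is a group: `(1 + x)⁻¹`
is a finite geometric series. If `P` and `Q` are disjoint with
`P + Q ⊆ P ∪ Q`, every `g ∈ 1 + A_{P ∪ Q}` factors as `(1 + A_P)(1 + A_Q)`: writing
`g - 1 = p + q`, the element `(1 + p)⁻¹ g (1 + q)⁻¹` is closer to `1` in the degree filtration, and
nilpotency ends the induction. The factorization is unique because the two groups meet only in `1`.
Splitting the nonzero degrees first as `θ > 0 | θ ≤ 0` and then `θ ≤ 0` as `θ = 0 | θ < 0` gives
the triple factorization. -/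

open Finset

theorem mul_mul_sub_one_eq_neg_mul {A : Type*} [Ring A] {g p q u v : A} (hg : g - 1 = p + q)
    (hu : u * (1 + p) = 1) (hv : (1 + q) * v = 1) : u * g * v - 1 = -((u - 1) * (v - 1)) :=
  calc u * g * v - 1 = u * (1 + p) * v + u * ((1 + q) * v) - u * v - 1 := by
        rw [← sub_add_cancel g 1, hg]; noncomm_ring
    _ = -((u - 1) * (v - 1)) := by rw [hu, hv]; noncomm_ring

namespace Submodule

variable {R A : Type*} [CommRing R] [Ring A] [Algebra R A] {M : Submodule R A}

theorem mul_sub_one_mem (hM : M * M ≤ M) {u v : A} (hu : u - 1 ∈ M) (hv : v - 1 ∈ M) :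
    u * v - 1 ∈ M := by
  have h : u * v - 1 = (u - 1) + (v - 1) + (u - 1) * (v - 1) := by noncomm_ring
  rw [h]
  exact add_mem (add_mem hu hv) (hM (mul_mem_mul hu hv))

theorem pow_succ_mem (hM : M * M ≤ M) {x : A} (hx : x ∈ M) (n : ℕ) : x ^ (n + 1) ∈ M := by
  induction n with
  | zero => simpa
  | succ n ih => rw [pow_succ]; exact hM (mul_mem_mul ih hx)

/-- The inverse of `1 - x` is the geometric series `∑ xⁱ`, all of whose terms but the first lie
in `M`. -/
theorem exists_inverse_of_sub_one_mem (hM : M * M ≤ M) {u : A} (hu : u - 1 ∈ M)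
    (hnil : IsNilpotent (u - 1)) : ∃ v, v - 1 ∈ M ∧ u * v = 1 ∧ v * u = 1 := by
  obtain ⟨N, hN⟩ := hnil.neg
  set x := -(u - 1) with hx
  have hu' : u = 1 - x := by rw [hx]; abel
  have hxN : x ^ (N + 1) = 0 := by rw [pow_succ, hN, zero_mul]
  refine ⟨∑ i ∈ range (N + 1), x ^ i, ?_, ?_, ?_⟩
  · rw [sum_range_succ', pow_zero, add_sub_cancel_right]
    exact sum_mem fun i _ => pow_succ_mem hM (neg_mem hu) i
  · rw [hu', mul_neg_geom_sum, hxN, sub_zero]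
  · rw [hu', geom_sum_mul_neg, hxN, sub_zero]

end Submodule

section GradedSpan

variable {M R A : Type*} [CommRing R] [Ring A] [Algebra R A] (𝒜 : M → Submodule R A)

def gradedSpan (P : M → Prop) : Submodule R A := ⨆ (n) (_ : P n), 𝒜 n

variable {𝒜} {P Q S : M → Prop}

theorem gradedSpan_mono (h : ∀ n, P n → Q n) : gradedSpan 𝒜 P ≤ gradedSpan 𝒜 Q :=
  biSup_mono h

theorem gradedSpan_eq_bot (h : ∀ n, P n → 𝒜 n = ⊥) : gradedSpan 𝒜 P = ⊥ :=
  iSup₂_eq_bot.2 h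

theorem gradedSpan_or : gradedSpan 𝒜 (fun n => P n ∨ Q n) = gradedSpan 𝒜 P ⊔ gradedSpan 𝒜 Q := by
  simp only [gradedSpan, iSup_or, iSup_sup_eq]

theorem gradedSpan_mul_le [AddMonoid M] [SetLike.GradedMonoid 𝒜]
    (h : ∀ n m, P n → Q m → S (n + m)) : gradedSpan 𝒜 P * gradedSpan 𝒜 Q ≤ gradedSpan 𝒜 S := by
  simp only [gradedSpan, Submodule.iSup_mul, Submodule.mul_iSup, iSup_le_iff]
  intro m hm n hn
  refine Submodule.mul_le.2 fun x hx y hy => ?_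
  exact le_iSup₂ (f := fun n (_ : S n) => 𝒜 n) (n + m) (h n m hn hm) (SetLike.mul_mem_graded hx hy)

theorem disjoint_gradedSpan [AddMonoid M] [DecidableEq M] [GradedAlgebra 𝒜]
    (h : ∀ n, P n → ¬ Q n) : Disjoint (gradedSpan 𝒜 P) (gradedSpan 𝒜 Q) :=
  (DirectSum.Decomposition.isInternal 𝒜).submodule_iSupIndep.disjoint_biSup_biSup
    (s := {n | P n}) (t := {n | Q n}) (Set.disjoint_left.2 h)

end GradedSpan

theorem sum_apply_add {ι : Type*} [Fintype ι] (n m : ι → ℕ) :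
    ∑ i, (n + m) i = ∑ i, n i + ∑ i, m i :=
  sum_add_distrib

theorem one_le_sum_apply {ι : Type*} [Fintype ι] {n : ι → ℕ} (h : n ≠ 0) : 1 ≤ ∑ i, n i := by
  rw [Nat.one_le_iff_ne_zero, Ne, sum_eq_zero_iff]
  simpa [funext_iff] using h

/-- The conditions on two sets of degrees under which `1 + A_{P ∪ Q} = (1 + A_P)(1 + A_Q)` with
unique factors. -/
structure IsSplitting {M : Type*} [Add M] [Zero M] (P Q : M → Prop) : Prop where
  add_left : ∀ n m, P n → P m → P (n + m)
  add_right : ∀ n m, Q n → Q m → Q (n + m)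
  ne_zero_left : ∀ n, P n → n ≠ 0
  ne_zero_right : ∀ n, Q n → n ≠ 0
  add_left_right : ∀ n m, P n → Q m → P (n + m) ∨ Q (n + m)
  disjoint : ∀ n, P n → ¬ Q n

section Unipotent

variable {ι R A : Type*} [Fintype ι] [CommRing R] [Ring A] [Algebra R A]
  {𝒜 : (ι → ℕ) → Submodule R A} {k : ℕ} {P Q : (ι → ℕ) → Prop}

theorem pow_succ_mem_gradedSpan [SetLike.GradedMonoid 𝒜] {x : A}
    (hx : x ∈ gradedSpan 𝒜 fun n => n ≠ 0) (j : ℕ) :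
    x ^ (j + 1) ∈ gradedSpan 𝒜 fun n => j + 1 ≤ ∑ i, n i := by
  induction j with
  | zero => simpa using gradedSpan_mono (fun n => one_le_sum_apply) hx
  | succ j ih =>
    rw [pow_succ]
    refine gradedSpan_mul_le (fun n m hn hm => ?_) (Submodule.mul_mem_mul ih hx)
    have := one_le_sum_apply hm
    rw [sum_apply_add]
    omega

theorem isNilpotent_of_mem_gradedSpan [SetLike.GradedMonoid 𝒜]
    (hbound : ∀ n : ι → ℕ, k < ∑ i, n i → 𝒜 n = ⊥) (hP : ∀ n, P n → n ≠ 0) {x : A}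
    (hx : x ∈ gradedSpan 𝒜 P) : IsNilpotent x := by
  refine ⟨k + 1, ?_⟩
  have hvanish : (gradedSpan 𝒜 fun n : ι → ℕ => k < ∑ i, n i) = ⊥ :=
    gradedSpan_eq_bot hbound
  simpa [hvanish] using pow_succ_mem_gradedSpan (gradedSpan_mono hP hx) k

theorem exists_inverse_of_sub_one_mem_gradedSpan [SetLike.GradedMonoid 𝒜]
    (hbound : ∀ n : ι → ℕ, k < ∑ i, n i → 𝒜 n = ⊥) (hadd : ∀ n m, P n → P m → P (n + m))
    (hP : ∀ n, P n → n ≠ 0) {u : A} (hu : u - 1 ∈ gradedSpan 𝒜 P) :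
    ∃ v, v - 1 ∈ gradedSpan 𝒜 P ∧ u * v = 1 ∧ v * u = 1 :=
  Submodule.exists_inverse_of_sub_one_mem (gradedSpan_mul_le hadd) hu
    (isNilpotent_of_mem_gradedSpan hbound hP hu)

/-- If `g - 1 = p + q` has degree `≥ d`, then `(1 + p)⁻¹ g (1 + q)⁻¹` is `1` plus a product of two
terms of degree `≥ d` and `≥ 1`. -/
theorem IsSplitting.exists_eq_mul_mul_of_le_deg [SetLike.GradedMonoid 𝒜] (hS : IsSplitting P Q)
    (hbound : ∀ n : ι → ℕ, k < ∑ i, n i → 𝒜 n = ⊥) {d : ℕ} {g : A}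
    (hg : g - 1 ∈ gradedSpan 𝒜 fun n => (P n ∨ Q n) ∧ d ≤ ∑ i, n i) :
    ∃ u v g', u - 1 ∈ gradedSpan 𝒜 P ∧ v - 1 ∈ gradedSpan 𝒜 Q ∧
      g' - 1 ∈ (gradedSpan 𝒜 fun n => (P n ∨ Q n) ∧ d + 1 ≤ ∑ i, n i) ∧ g = u * g' * v := by
  have hd : ∀ n m : ι → ℕ, d ≤ ∑ i, n i → d ≤ ∑ i, (n + m) i := fun n m hn => by
    rw [sum_apply_add]; omega
  have hsplit : g - 1 ∈ (gradedSpan 𝒜 fun n => P n ∧ d ≤ ∑ i, n i) ⊔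
      gradedSpan 𝒜 fun n => Q n ∧ d ≤ ∑ i, n i := by
    rw [← gradedSpan_or]
    exact gradedSpan_mono (fun n ⟨hPQ, hn⟩ => hPQ.imp (⟨·, hn⟩) (⟨·, hn⟩)) hg
  obtain ⟨p, hp, q, hq, hpq⟩ := Submodule.mem_sup.1 hsplit
  obtain ⟨u, hu, hu₁, hu₂⟩ := exists_inverse_of_sub_one_mem_gradedSpan
    (P := fun n => P n ∧ d ≤ ∑ i, n i) (u := 1 + p) hbound
    (fun n m hn hm => ⟨hS.add_left n m hn.1 hm.1, hd n m hn.2⟩)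
    (fun n hn => hS.ne_zero_left n hn.1) (by simpa using hp)
  obtain ⟨v, hv, hv₁, hv₂⟩ := exists_inverse_of_sub_one_mem_gradedSpan
    (P := fun n => Q n ∧ d ≤ ∑ i, n i) (u := 1 + q) hbound
    (fun n m hn hm => ⟨hS.add_right n m hn.1 hm.1, hd n m hn.2⟩)
    (fun n hn => hS.ne_zero_right n hn.1) (by simpa using hq)
  refine ⟨1 + p, 1 + q, u * g * v,
    by simpa using gradedSpan_mono (fun n hn => hn.1) hp,
    by simpa using gradedSpan_mono (fun n hn => hn.1) hq, ?_, ?_⟩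
  · rw [mul_mul_sub_one_eq_neg_mul hpq.symm hu₂ hv₁]
    refine neg_mem (gradedSpan_mul_le (fun n m hn hm => ⟨?_, ?_⟩) (Submodule.mul_mem_mul hu hv))
    · exact hS.add_left_right n m hn.1 hm.1
    · have := one_le_sum_apply (hS.ne_zero_right m hm.1)
      rw [sum_apply_add]
      omega
  · rw [← mul_assoc, ← mul_assoc, hu₁, one_mul, mul_assoc, hv₂, mul_one]

theorem IsSplitting.exists_mul_eq [SetLike.GradedMonoid 𝒜] (hS : IsSplitting P Q)
    (hbound : ∀ n : ι → ℕ, k < ∑ i, n i → 𝒜 n = ⊥) {g : A}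
    (hg : g - 1 ∈ gradedSpan 𝒜 fun n => P n ∨ Q n) :
    ∃ u v, u - 1 ∈ gradedSpan 𝒜 P ∧ v - 1 ∈ gradedSpan 𝒜 Q ∧ g = u * v := by
  suffices key : ∀ j d, k < d + j → ∀ g : A,
      g - 1 ∈ (gradedSpan 𝒜 fun n => (P n ∨ Q n) ∧ d ≤ ∑ i, n i) →
      ∃ u v, u - 1 ∈ gradedSpan 𝒜 P ∧ v - 1 ∈ gradedSpan 𝒜 Q ∧ g = u * v from
    key (k + 1) 0 (by omega) g (gradedSpan_mono (fun n hn => ⟨hn, Nat.zero_le _⟩) hg)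
  intro j
  induction j with
  | zero =>
    intro d hd g hg
    rw [gradedSpan_eq_bot fun n hn => hbound n (by omega), Submodule.mem_bot, sub_eq_zero] at hg
    exact ⟨1, 1, by simp, by simp, by simp [hg]⟩
  | succ j ih =>
    intro d hd g hg
    obtain ⟨u, v, g', hu, hv, hg', rfl⟩ := hS.exists_eq_mul_mul_of_le_deg hbound hg
    obtain ⟨u₁, v₁, hu₁, hv₁, rfl⟩ := ih (d + 1) (by omega) g' hg'
    exact ⟨u * u₁, v₁ * v, Submodule.mul_sub_one_mem (gradedSpan_mul_le hS.add_left) hu hu₁,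
      Submodule.mul_sub_one_mem (gradedSpan_mul_le hS.add_right) hv₁ hv, by simp only [mul_assoc]⟩

/-- `G_P ∩ G_Q = 1` because `P` and `Q` index disjoint sets of graded pieces. -/
theorem IsSplitting.eq_and_eq_of_mul_eq_mul [DecidableEq (ι → ℕ)] [GradedAlgebra 𝒜]
    (hS : IsSplitting P Q) (hbound : ∀ n : ι → ℕ, k < ∑ i, n i → 𝒜 n = ⊥) {u v u' v' : A}
    (hu : u - 1 ∈ gradedSpan 𝒜 P) (hv : v - 1 ∈ gradedSpan 𝒜 Q)
    (hu' : u' - 1 ∈ gradedSpan 𝒜 P) (hv' : v' - 1 ∈ gradedSpan 𝒜 Q) (h : u * v = u' * v') :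
    u = u' ∧ v = v' := by
  obtain ⟨u'', hu'', hu''₁, hu''₂⟩ :=
    exists_inverse_of_sub_one_mem_gradedSpan hbound hS.add_left hS.ne_zero_left hu'
  obtain ⟨v'', hv'', hv''₁, hv''₂⟩ :=
    exists_inverse_of_sub_one_mem_gradedSpan hbound hS.add_right hS.ne_zero_right hv
  have hw : u'' * u = v' * v'' := calc
    u'' * u = u'' * (u * v) * v'' := by simp only [mul_assoc, hv''₁, mul_one]
    _ = v' * v'' := by rw [h, ← mul_assoc u'', hu''₂, one_mul]
  have hw₁ : u'' * u = 1 := by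
    have hP := Submodule.mul_sub_one_mem (gradedSpan_mul_le hS.add_left) hu'' hu
    have hQ := Submodule.mul_sub_one_mem (gradedSpan_mul_le hS.add_right) hv' hv''
    rw [← hw] at hQ
    exact sub_eq_zero.1 ((Submodule.disjoint_def.1 (disjoint_gradedSpan hS.disjoint)) _ hP hQ)
  constructor
  · calc u = u' * (u'' * u) := by rw [← mul_assoc, hu''₁, one_mul]
      _ = u' := by rw [hw₁, mul_one]
  · calc v = (v' * v'') * v := by rw [← hw, hw₁, one_mul]
      _ = v' := by rw [mul_assoc, hv''₂, mul_one]

end Unipotent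

section ThetaPair

variable {r : ℕ} (θ : Fin r → ℝ)

theorem thetaPair'_add (n m : Fin r → ℕ) :
    thetaPair' θ (n + m) = thetaPair' θ n + thetaPair' θ m := by
  simp only [thetaPair', Pi.add_apply, Nat.cast_add, mul_add, sum_add_distrib]

theorem ne_zero_of_thetaPair'_ne_zero {n : Fin r → ℕ} (h : thetaPair' θ n ≠ 0) : n ≠ 0 := by
  rintro rfl
  simp [thetaPair'] at h

theorem isSplitting_thetaPair'_pos_nonpos :
    IsSplitting (fun n => 0 < thetaPair' θ n) (fun n => n ≠ 0 ∧ thetaPair' θ n ≤ 0) where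
  add_left n m hn hm := by rw [thetaPair'_add]; exact add_pos hn hm
  add_right n m hn hm :=
    ⟨fun h => hn.1 (add_eq_zero.1 h).1, by rw [thetaPair'_add]; exact add_nonpos hn.2 hm.2⟩
  ne_zero_left n hn := ne_zero_of_thetaPair'_ne_zero θ hn.ne'
  ne_zero_right n hn := hn.1
  add_left_right n m hn hm := by
    rcases lt_or_ge 0 (thetaPair' θ (n + m)) with h | h
    · exact Or.inl h
    · exact Or.inr ⟨fun h => ne_zero_of_thetaPair'_ne_zero θ hn.ne' (add_eq_zero.1 h).1, h⟩
  disjoint n hn hm := hm.2.not_gt hn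

theorem isSplitting_thetaPair'_zero_neg :
    IsSplitting (fun n => n ≠ 0 ∧ thetaPair' θ n = 0) (fun n => thetaPair' θ n < 0) where
  add_left n m hn hm :=
    ⟨fun h => hn.1 (add_eq_zero.1 h).1, by rw [thetaPair'_add, hn.2, hm.2, add_zero]⟩
  add_right n m hn hm := by rw [thetaPair'_add]; exact add_neg hn hm
  ne_zero_left n hn := hn.1
  ne_zero_right n hn := ne_zero_of_thetaPair'_ne_zero θ hn.ne
  add_left_right n m hn hm := Or.inr (by rw [thetaPair'_add, hn.2, zero_add]; exact hm)
  disjoint n hn hm := hm.ne hn.2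

end ThetaPair

theorem unique_theta_factorization
    (r k : ℕ) (A : Type*) [Ring A] [Algebra ℂ A]
    (𝒜 : (Fin r → ℕ) → Submodule ℂ A) [GradedAlgebra 𝒜]
    (hbound : ∀ n : Fin r → ℕ, (∑ i, n i) > k → 𝒜 n = ⊥)
    (θ : Fin r → ℝ)
    (Apos Aplus Azero Aminus : Submodule ℂ A)
    (hpos : Apos = ⨆ (n : Fin r → ℕ) (_ : n ≠ 0), 𝒜 n)
    (hplus : Aplus = ⨆ (n : Fin r → ℕ) (_ : 0 < thetaPair' θ n), 𝒜 n)
    (hzero : Azero = ⨆ (n : Fin r → ℕ) (_ : n ≠ 0 ∧ thetaPair' θ n = 0), 𝒜 n)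
    (hminus : Aminus = ⨆ (n : Fin r → ℕ) (_ : thetaPair' θ n < 0), 𝒜 n) :
    ∀ g : A, g - 1 ∈ Apos →
      ∃! t : A × A × A,
        t.1 - 1 ∈ Aplus ∧ t.2.1 - 1 ∈ Azero ∧ t.2.2 - 1 ∈ Aminus ∧
        g = t.1 * t.2.1 * t.2.2 := by
  subst hpos hplus hzero hminus
  intro g hg
  have hS₁ := isSplitting_thetaPair'_pos_nonpos θ
  have hS₂ := isSplitting_thetaPair'_zero_neg θ
  have hnonpos : ∀ n, (n ≠ 0 ∧ thetaPair' θ n = 0) ∨ thetaPair' θ n < 0 →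
      n ≠ 0 ∧ thetaPair' θ n ≤ 0 := by
    rintro n (hn | hn)
    · exact ⟨hn.1, hn.2.le⟩
    · exact ⟨hS₂.ne_zero_right n hn, hn.le⟩
  obtain ⟨u, w, hu, hw, rfl⟩ := hS₁.exists_mul_eq hbound (gradedSpan_mono
    (fun n hn => (lt_or_ge 0 (thetaPair' θ n)).imp id (⟨hn, ·⟩)) hg)
  obtain ⟨v, x, hv, hx, rfl⟩ := hS₂.exists_mul_eq hbound (gradedSpan_mono
    (fun n hn => (lt_or_eq_of_le hn.2).symm.imp (⟨hn.1, ·⟩) id) hw)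
  refine ⟨(u, v, x), ⟨hu, hv, hx, (mul_assoc u v x).symm⟩, ?_⟩
  rintro ⟨u', v', x'⟩ ⟨hu', hv', hx', h⟩
  have hvx' : v' * x' - 1 ∈ gradedSpan 𝒜 fun n => n ≠ 0 ∧ thetaPair' θ n ≤ 0 :=
    Submodule.mul_sub_one_mem (gradedSpan_mul_le hS₁.add_right)
      (gradedSpan_mono (fun n hn => hnonpos n (Or.inl hn)) hv')
      (gradedSpan_mono (fun n hn => hnonpos n (Or.inr hn)) hx')
  obtain ⟨rfl, hvx⟩ := hS₁.eq_and_eq_of_mul_eq_mul hbound hu' hvx' hu hw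
    (h.trans (mul_assoc u' v' x')).symm
  obtain ⟨rfl, rfl⟩ := hS₂.eq_and_eq_of_mul_eq_mul hbound hv' hx' hv hx hvx
  rfl
end

section
/- Let Q be an acyclic quiver with skew-symmetrized form ⟨e_i, e_j⟩ = a_{ji} - a_{ij}, where a_{ij} is the number of arrows from i to j. Then the only self-stable representations of Q are the vertex simples S_i. That is, if E is a nonzero finite-dimensional representation such that for every non-trivial short exact sequence 0 → A → E → B → 0 one has ⟨[A],[B]⟩ < 0, then E ≅ S_i for some vertex i. -/
/- STATEMENT 16: for an acyclic quiver Q, the only self-stable representations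
are the vertex simples S_i.  Representations of Q are formalized as functors
from the path category Paths Q to ModuleCat ℂ (finite-dimensional at every
vertex); the skew-symmetrized Euler form is ⟨e_i,e_j⟩ = a_{ji} - a_{ij}.
A representation with dimension vector e_i is exactly S_i, so the conclusion
is stated as: the dimension vector of E is a standard basis vector. -/

open CategoryTheory CategoryTheory.Limits

/-- The skew-symmetrized form ⟨a,b⟩ = Σ_{i,j} (a_{ji} - a_{ij}) a_i b_j. -/
def skewEulerForm {V : Type} [Quiver.{1} V] [Fintype V]
    [∀ i j : V, Fintype (i ⟶ j)] (a b : V → ℕ) : ℤ :=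
  ∑ i : V, ∑ j : V,
    ((Fintype.card (j ⟶ i) : ℤ) - (Fintype.card (i ⟶ j) : ℤ)) * (a i : ℤ) * (b j : ℤ)

/-- The dimension vector of a representation (a functor on the path category). -/
noncomputable def dimVec {V : Type} [Quiver.{1} V]
    (E : Paths V ⥤ ModuleCat ℂ) (i : V) : ℕ :=
  Module.finrank ℂ (E.obj ((Paths.of V).obj i))

/-!
Pick a vertex `i` in the support of `E` from which no path of positive length leads back into the
support (it exists because `Q` is acyclic), and a nonzero `x ∈ E i`. The subrepresentation
`A ⊆ E` generated by `x` lives on vertices reachable from `i`, so no arrow goes from the support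
of `A` to the support of `E / A`: such an arrow would give a path of positive length from `i`
into the support of `E`. Then `⟨[A], [E / A]⟩ = Σ a_{ji} [A]_i [E / A]_j ≥ 0`, and self-stability
forces `A = E`. Thus `E` vanishes away from `i`, and `E i = ℂ x` since the only path from `i` to
itself is trivial.
-/

universe v

namespace CategoryTheory.Functor

variable {C : Type*} [Category C] {R : Type*} [Ring R]

section Quotient

variable (E : C ⥤ ModuleCat.{v} R) (U : ∀ c, Submodule R (E.obj c))
  (hU : ∀ {c d : C} (f : c ⟶ d), U c ≤ (U d).comap (E.map f).hom)

@[simps obj]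
noncomputable def quotientBy : C ⥤ ModuleCat R where
  obj c := ModuleCat.of R (E.obj c ⧸ U c)
  map f := ModuleCat.ofHom (Submodule.mapQ _ _ (E.map f).hom (hU f))
  map_id c := by
    ext x
    simp
  map_comp f g := by
    ext x
    simp

noncomputable def toQuotientBy : E ⟶ E.quotientBy U hU where
  app c := ModuleCat.ofHom (U c).mkQ

instance : Epi (E.toQuotientBy U hU) :=
  have (c : C) : Epi ((E.toQuotientBy U hU).app c) :=
    (ModuleCat.epi_iff_surjective _).2 (Submodule.mkQ_surjective _)
  NatTrans.epi_of_epi_app _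

noncomputable def kernelToQuotientByObjEquiv (c : C) :
    (Limits.kernel (E.toQuotientBy U hU)).obj c ≃ₗ[R] U c :=
  (Limits.PreservesKernel.iso ((evaluation C (ModuleCat R)).obj c) (E.toQuotientBy U hU) ≪≫
    ModuleCat.kernelIsoKer _).toLinearEquiv.trans
    (LinearEquiv.ofEq _ _ (Submodule.ker_mkQ (U c)))

theorem shortExact_toQuotientBy :
    (ShortComplex.mk _ _ (Limits.kernel.condition (E.toQuotientBy U hU))).ShortExact where
  exact := ShortComplex.exact_of_f_is_kernel _ (Limits.kernelIsKernel _)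

end Quotient

section SpanOrbit

variable (E : C ⥤ ModuleCat R) {c : C} (x : E.obj c)

/-- The subrepresentation generated by `x`. -/
def spanOrbit (d : C) : Submodule R (E.obj d) :=
  Submodule.span R (Set.range fun f : c ⟶ d => (E.map f).hom x)

theorem spanOrbit_le_comap {d d' : C} (g : d ⟶ d') :
    E.spanOrbit x d ≤ (E.spanOrbit x d').comap (E.map g).hom :=
  Submodule.span_le.2 <| by
    rintro _ ⟨f, rfl⟩
    exact Submodule.subset_span ⟨f ≫ g, by simp⟩

theorem mem_spanOrbit_self : x ∈ E.spanOrbit x c :=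
  Submodule.subset_span ⟨𝟙 c, by simp⟩

theorem nonempty_hom_of_spanOrbit_ne_bot {d : C} (h : E.spanOrbit x d ≠ ⊥) :
    Nonempty (c ⟶ d) := by
  by_contra hempty
  rw [not_nonempty_iff] at hempty
  exact h (by simp [spanOrbit, Set.range_eq_empty])

theorem spanOrbit_self_eq_span_singleton [Subsingleton (c ⟶ c)] :
    E.spanOrbit x c = R ∙ x := by
  have : Unique (c ⟶ c) := uniqueOfSubsingleton (𝟙 c)
  simp [spanOrbit, Set.range_unique, Subsingleton.elim default (𝟙 c)]

end SpanOrbit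

end CategoryTheory.Functor

theorem Quiver.exists_mem_forall_path_length_eq_zero {V : Type*} [Quiver V] [Finite V]
    (hacyclic : ∀ (i : V) (p : Quiver.Path i i), p.length = 0) {s : Set V} (hs : s.Nonempty) :
    ∃ i ∈ s, ∀ j ∈ s, ∀ p : Quiver.Path i j, p.length = 0 := by
  let r (j i : V) : Prop := ∃ p : Quiver.Path i j, 0 < p.length
  have : IsTrans V r := ⟨fun _ _ _ ⟨q, hq⟩ ⟨p, hp⟩ => ⟨p.comp q, by rw [Quiver.Path.length_comp]; omega⟩⟩
  have : Std.Irrefl r := ⟨fun i ⟨p, hp⟩ => by simp [hacyclic i p] at hp⟩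
  obtain ⟨i, hi, hmin⟩ := (Finite.wellFounded_of_trans_of_irrefl r).has_min s hs
  exact ⟨i, hi, fun j hj p => by by_contra h; exact hmin j hj ⟨p, by omega⟩⟩

section SelfStable

variable {V : Type} [Quiver.{1} V] [Fintype V] [∀ i j : V, Fintype (i ⟶ j)]

theorem skewEulerForm_nonneg (a b : V → ℕ)
    (h : ∀ i j : V, a i ≠ 0 → b j ≠ 0 → IsEmpty (i ⟶ j)) :
    0 ≤ skewEulerForm a b := by
  refine Finset.sum_nonneg fun i _ => Finset.sum_nonneg fun j _ => ?_
  by_cases hai : a i = 0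
  · simp [hai]
  by_cases hbj : b j = 0
  · simp [hbj]
  have := h i j hai hbj
  simp only [Fintype.card_eq_zero, Nat.cast_zero, sub_zero]
  positivity

def IsSelfStable (E : Paths V ⥤ ModuleCat ℂ) : Prop :=
  ∀ (A B : Paths V ⥤ ModuleCat ℂ) (f : A ⟶ E) (g : E ⟶ B) (w : f ≫ g = 0),
    (ShortComplex.mk f g w).ShortExact → ¬ IsZero A → ¬ IsZero B →
      skewEulerForm (dimVec A) (dimVec B) < 0

theorem IsSelfStable.eq_top {E : Paths V ⥤ ModuleCat ℂ} (hE : IsSelfStable E)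
    (U : ∀ v, Submodule ℂ (E.obj v))
    (hU : ∀ {v w : Paths V} (p : v ⟶ w), U v ≤ (U w).comap (E.map p).hom)
    (hne : ∃ v, U v ≠ ⊥)
    (hclosed : ∀ k l : V, (k ⟶ l) → U ((Paths.of V).obj k) ≠ ⊥ → U ((Paths.of V).obj l) = ⊤)
    (v : Paths V) :
    U v = ⊤ := by
  by_contra hv
  have hA : ¬ IsZero (kernel (E.toQuotientBy U hU)) := by
    obtain ⟨w, hw⟩ := hne
    simp only [Functor.isZero_iff, ModuleCat.isZero_iff_subsingleton, not_forall]
    exact ⟨w, fun h => hw <| Submodule.subsingleton_iff_eq_bot.1 <|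
      (E.kernelToQuotientByObjEquiv U hU w).toEquiv.subsingleton_congr.1 h⟩
  have hB : ¬ IsZero (E.quotientBy U hU) := by
    simp only [Functor.isZero_iff, ModuleCat.isZero_iff_subsingleton, not_forall]
    exact ⟨v, by simpa using hv⟩
  refine (hE _ _ _ _ _ (E.shortExact_toQuotientBy U hU) hA hB).not_ge <|
    skewEulerForm_nonneg _ _ fun k l hk hl => ⟨fun e => hl ?_⟩
  have hUl : U ((Paths.of V).obj l) = ⊤ := hclosed k l e fun h => hk ?_
  · have : Subsingleton (E.obj _ ⧸ U _) := Submodule.Quotient.subsingleton_iff.2 hUl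
    exact Module.finrank_zero_of_subsingleton (M := E.obj _ ⧸ U _)
  · rw [dimVec, (E.kernelToQuotientByObjEquiv U hU _).finrank_eq, h, finrank_bot]

end SelfStable

theorem selfstable_implies_vertex_simple
    {V : Type} [Quiver.{1} V] [Fintype V] [DecidableEq V]
    [∀ i j : V, Fintype (i ⟶ j)]
    -- Q is acyclic: there are no oriented cycles.
    (hacyclic : ∀ (i : V) (p : Quiver.Path i i), p.length = 0)
    (E : Paths V ⥤ ModuleCat ℂ)
    (hfd : ∀ i : V, FiniteDimensional ℂ (E.obj ((Paths.of V).obj i)))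
    (hE : ¬ IsZero E)
    -- E is self-stable: ⟨[A],[B]⟩ < 0 for every non-trivial SES 0 → A → E → B → 0.
    (hstable : ∀ (A B : Paths V ⥤ ModuleCat ℂ) (f : A ⟶ E) (g : E ⟶ B)
      (w : f ≫ g = 0), (ShortComplex.mk f g w).ShortExact →
      ¬ IsZero A → ¬ IsZero B → skewEulerForm (dimVec A) (dimVec B) < 0) :
    ∃ i : V, ∀ j : V, dimVec E j = if j = i then 1 else 0 := by
  obtain ⟨v, hv⟩ : ∃ v : Paths V, Nontrivial (E.obj v) := by
    simpa [Functor.isZero_iff, ModuleCat.isZero_iff_subsingleton,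
      not_subsingleton_iff_nontrivial] using hE
  obtain ⟨i, hi : Nontrivial _, hmin⟩ := Quiver.exists_mem_forall_path_length_eq_zero hacyclic
    (s := {v | Nontrivial (E.obj ((Paths.of V).obj v))}) ⟨v, hv⟩
  obtain ⟨x, hx⟩ := exists_ne (0 : E.obj ((Paths.of V).obj i))
  have htop : ∀ v, E.spanOrbit x v = ⊤ := by
    refine IsSelfStable.eq_top hstable _ (E.spanOrbit_le_comap x)
      ⟨i, (Submodule.ne_bot_iff _).2 ⟨x, E.mem_spanOrbit_self x, hx⟩⟩ fun k l e hk => ?_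
    obtain ⟨p⟩ := E.nonempty_hom_of_spanOrbit_ne_bot x hk
    by_contra hl
    have : Nontrivial (E.obj ((Paths.of V).obj l)) := by
      contrapose! hl
      exact Subsingleton.elim _ _
    exact Nat.succ_ne_zero _ (hmin l this (p.cons e))
  have hsupp (j : V) (hj : Nontrivial (E.obj ((Paths.of V).obj j))) : j = i := by
    obtain ⟨p⟩ := E.nonempty_hom_of_spanOrbit_ne_bot x (d := (Paths.of V).obj j)
      (ne_of_eq_of_ne (htop _) top_ne_bot)
    exact (Quiver.Path.eq_of_length_zero p (hmin j hj p)).symm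
  have : Subsingleton ((Paths.of V).obj i ⟶ (Paths.of V).obj i) :=
    ⟨fun p q => (p.eq_nil_of_length_zero (hacyclic i p)).trans
      (q.eq_nil_of_length_zero (hacyclic i q)).symm⟩
  refine ⟨i, fun j => ?_⟩
  split_ifs with hji
  · subst hji
    rw [dimVec, ← finrank_top, ← htop, E.spanOrbit_self_eq_span_singleton,
      finrank_span_singleton hx]
  · have : Subsingleton (E.obj ((Paths.of V).obj j)) :=
      not_nontrivial_iff_subsingleton.1 fun h => hji (hsupp j h)
    exact Module.finrank_zero_of_subsingleton
end

section
/- Let A be the category of representations of a quiver with relations, θ ∈ M_R, and m ∈ M^⊕ with corresponding projective P = P(m). Given a framed representation ν : P → E with E ∈ F(θ), there exists a unique short exact sequence 0 → A → E → B → 0 with A, B ∈ F(θ), the composite P → E → B zero, and coker(P → A) ∈ T(θ). Moreover B is the torsion-free part (with respect to (T(θ),F(θ))) of coker(ν). -/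
/- STATEMENT 17: given a framed object ν : P → E with E ∈ F(θ), there is a
unique short exact sequence 0 → A → E → B → 0 (unique as a subobject A ⊆ E)
with A, B ∈ F(θ), the composite P → E → B zero (equivalently ν factors through
A), and coker(P → A) ∈ T(θ).  Moreover B is the torsion-free part of coker(ν).
The abelian category abstracts finite-dimensional representations of a quiver
with relations; finite length is imposed via well-founded subobject lattices. -/

open CategoryTheory CategoryTheory.Limits

universe v u
variable {𝒜 : Type u} [Category.{v} 𝒜] [Abelian 𝒜]

/-- Membership in the torsion class T(θ). -/
def InTorsionClass (θ : 𝒜 → ℝ) (E : 𝒜) : Prop :=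
  ∀ (Q : 𝒜) (p : E ⟶ Q), Epi p → ¬ IsZero Q → 0 < θ Q

/-- Membership in the torsion-free class F(θ). -/
def InTorsionFreeClass (θ : 𝒜 → ℝ) (E : 𝒜) : Prop :=
  ∀ (A : 𝒜) (f : A ⟶ E), Mono f → θ A ≤ 0

/-- The subobject `S ⊆ E` gives the required short exact sequence
`0 → S → E → E/S → 0` for the framing `ν : P ⟶ E`. -/
def IsFramingSub (θ : 𝒜 → ℝ) {P E : 𝒜} (ν : P ⟶ E) (S : Subobject E) : Prop :=
  InTorsionFreeClass θ ((S : 𝒜)) ∧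
  InTorsionFreeClass θ (cokernel S.arrow) ∧
  ν ≫ cokernel.π S.arrow = 0 ∧
  ∀ ν' : P ⟶ (S : 𝒜), ν' ≫ S.arrow = ν → InTorsionClass θ (cokernel ν')

/-!
Among the subobjects `S ⊆ E` through which `ν` factors as `ν' ≫ S.arrow` with `coker ν'`
torsion (the image of `ν` is one), take a maximal one. If `E/S` were not torsion-free, a subobject
of `E/S` minimal among those of positive `θ` would be a nonzero torsion subobject `B`, and its
preimage `S' ⊃ S` would contradict maximality: `coker (P → S')` is an extension of `S'/S ≅ B` by
`coker ν'`. Any two such subobjects `S₁, S₂` with torsion-free quotients satisfy `S₁ ≤ S₂`, since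
`S₁ → E/S₂` factors through the torsion object `coker (P → S₁)`. Finally `ν = ν' ≫ S.arrow` with
`S.arrow` mono gives the exact sequence `0 → coker ν' → coker ν → E/S → 0`.
-/

lemma shortExact_cokernel_map_of_mono {X Y Z : 𝒜} (f : X ⟶ Y) (g : Y ⟶ Z) [Mono g] :
    (ShortComplex.mk (cokernel.map f (f ≫ g) (𝟙 X) g (by simp))
      (cokernel.map (f ≫ g) g f (𝟙 Z) (by simp)) (by ext; simp)).ShortExact := by
  have hseq := kernelCokernelCompSequence_exact f g
  exact
    { exact := hseq.exact 3
      mono_f := (hseq.exact 2).mono_g ((isZero_kernel_of_mono g).eq_of_src _ _)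
      epi_g := inferInstanceAs (Epi ((kernelCokernelCompSequence f g).map' 4 5)) }

lemma CategoryTheory.ShortComplex.ShortExact.pullback {S : ShortComplex 𝒜} (hS : S.ShortExact)
    {B : 𝒜} (b : B ⟶ S.X₃) [Mono b] :
    (ShortComplex.mk (pullback.lift S.f 0 (by simp)) (pullback.snd S.g b)
      (pullback.lift_snd _ _ _)).ShortExact where
  mono_f := have := hS.mono_f; mono_of_mono_fac (pullback.lift_fst _ _ _)
  epi_g := have := hS.epi_g; inferInstance
  exact := by
    rw [ShortComplex.exact_iff_exact_up_to_refinements]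
    intro A x hx
    obtain ⟨A', π, hπ, x₁, fac⟩ := hS.exact.exact_up_to_refinements (x ≫ pullback.fst _ _)
      (by simpa [pullback.condition] using hx =≫ b)
    refine ⟨A', π, hπ, x₁, pullback.hom_ext ?_ ?_⟩
    · rw [Category.assoc, Category.assoc, pullback.lift_fst, fac]
    · rw [Category.assoc, Category.assoc, pullback.lift_snd, comp_zero, hx, comp_zero]

def IsShortExactAdditive (θ : 𝒜 → ℝ) : Prop :=
  ∀ S : ShortComplex 𝒜, S.ShortExact → θ S.X₂ = θ S.X₁ + θ S.X₃

namespace IsShortExactAdditive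

variable {θ : 𝒜 → ℝ} (hθ : IsShortExactAdditive θ)
include hθ

lemma eq_add_of_epi {X Y : 𝒜} (p : X ⟶ Y) [Epi p] : θ X = θ (kernel p) + θ Y :=
  hθ _ { exact := ShortComplex.exact_kernel p }

lemma eq_zero_of_isZero {X : 𝒜} (hX : IsZero X) : θ X = 0 := by
  have := hX.epi (0 : X ⟶ X)
  have := hθ (ShortComplex.mk (𝟙 X) (0 : X ⟶ X) comp_zero)
    { exact := ShortComplex.exact_of_isZero_X₂ _ hX }
  dsimp at this
  linarith

lemma eq_of_iso {X Y : 𝒜} (e : X ≅ Y) : θ X = θ Y := by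
  rw [hθ.eq_add_of_epi e.hom, hθ.eq_zero_of_isZero (isZero_kernel_of_mono e.hom), zero_add]

end IsShortExactAdditive

section

variable {θ : 𝒜 → ℝ}

instance : ObjectProperty.IsClosedUnderQuotients (InTorsionClass θ) where
  prop_of_epi e _ hX Q p _ hQ := hX Q (e ≫ p) inferInstance hQ

instance : ObjectProperty.IsClosedUnderSubobjects (InTorsionFreeClass θ) where
  prop_of_mono i _ hY A f _ := hY A (f ≫ i) inferInstance

namespace InTorsionClass

lemma of_isZero {X : 𝒜} (hX : IsZero X) : InTorsionClass θ X :=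
  fun _ p _ hQ ↦ (hQ (hX.of_epi p)).elim

omit [Abelian 𝒜] in
lemma theta_pos {X : 𝒜} (h : InTorsionClass θ X) (hX : ¬ IsZero X) : 0 < θ X :=
  h X (𝟙 X) inferInstance hX

lemma theta_nonneg (hθ : IsShortExactAdditive θ) {X : 𝒜} (h : InTorsionClass θ X) :
    0 ≤ θ X := by
  by_cases hX : IsZero X
  · exact (hθ.eq_zero_of_isZero hX).ge
  · exact (h.theta_pos hX).le

lemma hom_eq_zero {X Y : 𝒜} (hX : InTorsionClass θ X) (hY : InTorsionFreeClass θ Y)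
    (f : X ⟶ Y) : f = 0 := by
  by_contra hf
  have hI : ¬ IsZero (Abelian.image f) := fun h ↦
    hf (by rw [← Abelian.image.fac f, h.eq_of_src (Abelian.image.ι f) 0, comp_zero])
  have := hX _ (Abelian.factorThruImage f) inferInstance hI
  have := hY _ (Abelian.image.ι f) inferInstance
  linarith

end InTorsionClass

lemma IsShortExactAdditive.inTorsionClass_isClosedUnderExtensions (hθ : IsShortExactAdditive θ) :
    ObjectProperty.IsClosedUnderExtensions (InTorsionClass θ) where
  prop_X₂_of_shortExact {S} hS h₁ h₃ Q p _ hQ := by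
    -- `Q` is an extension of a quotient of `S.X₃` by the image of `S.X₁`, a quotient of `S.X₁`.
    set g := S.f ≫ p
    obtain ⟨q, hq : S.g ≫ q = p ≫ cokernel.π g⟩ :=
      CokernelCofork.IsColimit.desc' hS.gIsCokernel (p ≫ cokernel.π g)
        (by rw [← Category.assoc]; exact cokernel.condition g)
    have : Epi q := by
      have : Epi (S.g ≫ q) := by rw [hq]; infer_instance
      exact epi_of_epi S.g q
    have hI : InTorsionClass θ (Abelian.image g) :=
      ObjectProperty.prop_of_epi _ (Abelian.factorThruImage g) h₁
    have hC : InTorsionClass θ (cokernel g) := ObjectProperty.prop_of_epi _ q h₃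
    rw [hθ.eq_add_of_epi (cokernel.π g)]
    by_contra! hle
    have hIz : IsZero (Abelian.image g) := by
      by_contra h; linarith [hI.theta_pos h, hC.theta_nonneg hθ]
    have hCz : IsZero (cokernel g) := by
      by_contra h; linarith [hC.theta_pos h, hI.theta_nonneg hθ]
    exact hQ (ObjectProperty.prop_X₂_of_shortExact IsZero
      { exact := ShortComplex.exact_kernel (cokernel.π g) } hIz hCz)

lemma IsShortExactAdditive.exists_torsion_subobject_of_not_inTorsionFreeClass
    (hθ : IsShortExactAdditive θ) {Y : 𝒜} [WellFoundedLT (Subobject Y)]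
    (hY : ¬ InTorsionFreeClass θ Y) :
    ∃ B : Subobject Y, InTorsionClass θ B ∧ ¬ IsZero (B : 𝒜) := by
  obtain ⟨A, a, ha, hA⟩ : ∃ (A : 𝒜) (a : A ⟶ Y), Mono a ∧ 0 < θ A := by
    simpa [InTorsionFreeClass] using hY
  obtain ⟨B, hB, hBmin⟩ := exists_minimal_of_wellFoundedLT (fun B : Subobject Y ↦ 0 < θ B)
    ⟨Subobject.mk a, by rwa [← hθ.eq_of_iso (Subobject.underlyingIso a)] at hA⟩
  refine ⟨B, fun Q p _ hQ ↦ ?_, fun h ↦ by linarith [hθ.eq_zero_of_isZero h]⟩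
  have hK : θ (kernel p) ≤ 0 := by
    by_contra! hK
    have hlt : Subobject.mk (kernel.ι p ≫ B.arrow) < B := by
      conv_rhs => rw [← Subobject.mk_arrow B]
      refine Subobject.mk_lt_mk_of_comm (kernel.ι p) rfl fun _ ↦ hQ ?_
      exact IsZero.of_epi_eq_zero p
        (by rw [← cancel_epi (kernel.ι p), kernel.condition, comp_zero])
    exact hlt.not_ge (hBmin (by rwa [← hθ.eq_of_iso (Subobject.underlyingIso
      (kernel.ι p ≫ B.arrow))] at hK) hlt.le)
  linarith [hθ.eq_add_of_epi p]

def FactorsWithTorsionCokernel (θ : 𝒜 → ℝ) {P E S : 𝒜} (ν : P ⟶ E) (s : S ⟶ E) :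
    Prop :=
  ∃ ν' : P ⟶ S, ν' ≫ s = ν ∧ InTorsionClass θ (cokernel ν')

namespace FactorsWithTorsionCokernel

variable {P E S : 𝒜} {ν : P ⟶ E} {s : S ⟶ E}

lemma image_ι (ν : P ⟶ E) : FactorsWithTorsionCokernel θ ν (Abelian.image.ι ν) :=
  ⟨Abelian.factorThruImage ν, Abelian.image.fac ν,
    InTorsionClass.of_isZero (isZero_cokernel_of_epi _)⟩

lemma subobjectMk [Mono s] (h : FactorsWithTorsionCokernel θ ν s) :
    FactorsWithTorsionCokernel θ ν (Subobject.mk s).arrow := by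
  obtain ⟨ν', hν', hT⟩ := h
  exact ⟨ν' ≫ (Subobject.underlyingIso s).inv, by simpa using hν',
    ObjectProperty.prop_of_iso _ (cokernelCompIsIso _ _).symm hT⟩

lemma pullback_fst (hθ : IsShortExactAdditive θ) [Mono s] (h : FactorsWithTorsionCokernel θ ν s)
    {B : 𝒜} (b : B ⟶ cokernel s) [Mono b] (hB : InTorsionClass θ B) :
    FactorsWithTorsionCokernel θ ν (pullback.fst (cokernel.π s) b) := by
  obtain ⟨ν', rfl, hν'⟩ := h
  have hs : (ShortComplex.mk s (cokernel.π s) (cokernel.condition s)).ShortExact :=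
    { exact := ShortComplex.exact_cokernel s }
  have hj := hs.pullback b
  set j : S ⟶ pullback (cokernel.π s) b := pullback.lift s 0 (by simp)
  have := hj.mono_f
  have := hθ.inTorsionClass_isClosedUnderExtensions
  refine ⟨ν' ≫ j, by rw [Category.assoc, pullback.lift_fst], ?_⟩
  refine ObjectProperty.prop_X₂_of_shortExact _ (shortExact_cokernel_map_of_mono ν' j) hν' ?_
  exact ObjectProperty.prop_of_iso _
    (IsColimit.coconePointUniqueUpToIso (cokernelIsCokernel j) hj.gIsCokernel).symm hB

end FactorsWithTorsionCokernel

lemma IsShortExactAdditive.exists_factorsWithTorsionCokernel_inTorsionFreeClass_cokernel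
    (hθ : IsShortExactAdditive θ) (hArtinian : ∀ X : 𝒜, WellFoundedLT (Subobject X))
    {P E : 𝒜} [WellFoundedGT (Subobject E)] (ν : P ⟶ E) :
    ∃ S : Subobject E, FactorsWithTorsionCokernel θ ν S.arrow ∧
      InTorsionFreeClass θ (cokernel S.arrow) := by
  obtain ⟨S, hS, hmax⟩ := exists_maximal_of_wellFoundedGT
    (fun S : Subobject E ↦ FactorsWithTorsionCokernel θ ν S.arrow)
    ⟨_, (FactorsWithTorsionCokernel.image_ι ν).subobjectMk⟩
  refine ⟨S, hS, ?_⟩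
  by_contra hF
  have := hArtinian (cokernel S.arrow)
  obtain ⟨B, hB, hB0⟩ := hθ.exists_torsion_subobject_of_not_inTorsionFreeClass hF
  set j : (S : 𝒜) ⟶ pullback (cokernel.π S.arrow) B.arrow := pullback.lift S.arrow 0 (by simp)
  have hlt : S < Subobject.mk (pullback.fst (cokernel.π S.arrow) B.arrow) := by
    conv_lhs => rw [← Subobject.mk_arrow S]
    refine Subobject.mk_lt_mk_of_comm j (pullback.lift_fst _ _ _) fun _ ↦ hB0 ?_
    exact IsZero.of_epi_eq_zero (pullback.snd _ _)
      (by rw [← cancel_epi j, pullback.lift_snd, comp_zero])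
  exact hlt.not_ge (hmax (hS.pullback_fst hθ B.arrow hB).subobjectMk hlt.le)

lemma isFramingSub_iff {P E : 𝒜} {ν : P ⟶ E} {S : Subobject E} :
    IsFramingSub θ ν S ↔ InTorsionFreeClass θ (S : 𝒜) ∧
      InTorsionFreeClass θ (cokernel S.arrow) ∧ FactorsWithTorsionCokernel θ ν S.arrow := by
  refine ⟨fun ⟨h₁, h₂, h₃, h₄⟩ ↦ ⟨h₁, h₂, _, Abelian.monoLift_comp _ _ h₃,
    h₄ _ (Abelian.monoLift_comp _ _ h₃)⟩, ?_⟩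
  rintro ⟨h₁, h₂, ν', rfl, h⟩
  refine ⟨h₁, h₂, by simp, fun ν'' hν'' ↦ ?_⟩
  rwa [(cancel_mono S.arrow).1 hν'']

lemma IsFramingSub.le {P E : 𝒜} {ν : P ⟶ E} {S₁ S₂ : Subobject E}
    (h₁ : IsFramingSub θ ν S₁) (h₂ : IsFramingSub θ ν S₂) : S₁ ≤ S₂ := by
  obtain ⟨-, -, ν₁, rfl, hT⟩ := isFramingSub_iff.1 h₁
  have hz : ν₁ ≫ S₁.arrow ≫ cokernel.π S₂.arrow = 0 := by
    rw [← Category.assoc]; exact h₂.2.2.1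
  have : S₁.arrow ≫ cokernel.π S₂.arrow = 0 := by
    rw [← cokernel.π_desc ν₁ _ hz, hT.hom_eq_zero h₂.2.1 (cokernel.desc ν₁ _ hz),
      comp_zero]
  exact Subobject.le_of_comm (Abelian.monoLift _ _ this) (Abelian.monoLift_comp _ _ this)

end

theorem framed_torsion_decomposition
    (θ : 𝒜 → ℝ)
    (hθadd : ∀ S : ShortComplex 𝒜, S.ShortExact → θ S.X₂ = θ S.X₁ + θ S.X₃)
    (hArtinian : ∀ X : 𝒜, WellFoundedLT (Subobject X))
    (hNoetherian : ∀ X : 𝒜, WellFoundedGT (Subobject X))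
    (P E : 𝒜) (ν : P ⟶ E) (hE : InTorsionFreeClass θ E) :
    (∃! S : Subobject E, IsFramingSub θ ν S) ∧
    -- moreover, for such S, the quotient B = E/S is the torsion-free part of coker ν:
    (∀ S : Subobject E, IsFramingSub θ ν S →
      ∃ (T' : 𝒜) (i : T' ⟶ cokernel ν) (p' : cokernel ν ⟶ cokernel S.arrow)
        (w : i ≫ p' = 0),
        InTorsionClass θ T' ∧ (ShortComplex.mk i p' w).ShortExact) := by
  have hθ : IsShortExactAdditive θ := hθadd
  have := hNoetherian E
  obtain ⟨S, hS, hSF⟩ :=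
    hθ.exists_factorsWithTorsionCokernel_inTorsionFreeClass_cokernel hArtinian ν
  have hSframing : IsFramingSub θ ν S :=
    isFramingSub_iff.2 ⟨ObjectProperty.prop_of_mono _ S.arrow hE, hSF, hS⟩
  refine ⟨⟨S, hSframing, fun S' hS' ↦ (hS'.le hSframing).antisymm (hSframing.le hS')⟩,
    fun S' hS' ↦ ?_⟩
  obtain ⟨-, -, ν', rfl, hT⟩ := isFramingSub_iff.1 hS'
  exact ⟨_, _, _, _, hT, shortExact_cokernel_map_of_mono ν' S'.arrow⟩
end
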